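/- Let t₁, t₂, …, tₙ be real numbers, congruent to one another modulo ℤ, with t₂ > t₃ > … > t_{n−1} > |tₙ|, and let t⁻ := (t₁, …, tₙ, −tₙ, …, −t₁) be the sequence of length 2n. Apply the Robinson–Schensted row insertion algorithm to t⁻ and let P(t⁻) be the resulting tableau. If −|tₙ| < t₁ ≤ t₂, then P(t⁻) has shape [2², 1^{2n−4}] or [2³, 1^{2n−6}]. If t₁ ≤ −|tₙ|, then P(t⁻) has shape [3, 1^{2n−3}] or [4, 1^{2n−4}]. -/

import Mathlib

/-! ## The Robinson–Schensted insertion algorithm -/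

section RS

variable {α : Type*} [LinearOrder α]

/-- Robinson–Schensted row insertion: insert `x` into a (weakly increasing) row,
bumping the first entry which is strictly greater than `x`. -/
def rowInsert : List α → α → List α × Option α
  | [], x => ([x], none)
  | y :: ys, x =>
    if x < y then (x :: ys, some y)
    else
      let p := rowInsert ys x
      (y :: p.1, p.2)

/-- Insert an entry into a tableau (recorded as its list of rows), bumping rows downwards. -/
def tableauInsert : List (List α) → α → List (List α)
  | [], x => [[x]]
  | r :: rs, x =>
    match rowInsert r x with
    | (r', none) => r' :: rs
    | (r', some y) => r' :: tableauInsert rs y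

/-- The Robinson–Schensted insertion tableau `P(w)` of a word `w`. -/
def RS (w : List α) : List (List α) := w.foldl tableauInsert []

/-- The shape `𝐩(w)` of the Robinson–Schensted tableau `P(w)`: its list of row lengths. -/
def RSshape (w : List α) : List ℕ := (RS w).map List.length

/-- The length of the `j`-th column (`j = 1, 2, …`) of the tableau `P(w)`. -/
def RScol (w : List α) (j : ℕ) : ℕ := ((RS w).filter fun r => j ≤ r.length).length

end RS

/-- For `λ = (t₁, …, tₙ)`, the sequence `λ⁻ = (t₁, …, tₙ, −tₙ, …, −t₁)`. -/
def minusSeq {α : Type*} [Neg α] (w : List α) : List α := w ++ w.reverse.map (fun x => -x)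

/-!
Write `t⁻ = s, u, a, -a, ū, -s` with `s = t₁`, `a = tₙ`, `u = (t₂, …, t_{n-1})` and
`ū = (-t_{n-1}, …, -t₂)`. Every entry of `u` exceeds `|a|`, so `u, a` and `-a, ū` are strictly
decreasing, and for `a > 0` so is the whole run `u, a, -a, ū`.

A strictly decreasing run is easy to insert into a tableau made of a first column with a few
short arms: its entries not below the top left entry take turns in the second box of the first
row, pushing one another into the first column, and its smaller entries push the whole first
column down. So every intermediate tableau keeps that form and can be written down explicitly.
The position of `s` relative to `±a` decides whether the last letter `-s` extends the first row
(shapes `[3, 1, …]` and `[4, 1, …]`) or bumps a chain of second boxes down (shapes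
`[2, 2, 1, …]` and `[2, 2, 2, 1, …]`); the number of ones is then forced by the total number of
boxes.
-/

open List

section SortedLists

variable {α : Type*} [LinearOrder α]

theorem exists_eq_append_cons_of_le {D : List α} {s y : α} (hy : y ∈ D) (hsy : s ≤ y) :
    ∃ M e D', D = M ++ e :: D' ∧ s ≤ e ∧ ∀ x ∈ D', x < s := by
  induction D generalizing y with
  | nil => simp at hy
  | cons z D ih =>
    by_cases h : ∃ y ∈ D, s ≤ y
    · obtain ⟨y, hy, hsy⟩ := h
      obtain ⟨M, e, D', rfl, hse, hD'⟩ := ih hy hsy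
      exact ⟨z :: M, e, D', rfl, hse, hD'⟩
    · push Not at h
      obtain rfl | hy := mem_cons.1 hy
      · exact ⟨[], y, D, rfl, hsy, h⟩
      · exact absurd (h y hy) (not_lt.2 hsy)

theorem le_of_cons_eq_append_cons {x e : α} {L M D : List α} (hL : x :: L = M ++ e :: D)
    (hsort : (M ++ e :: D).Pairwise (· > ·)) : e ≤ x := by
  rcases cons_eq_append_iff.1 hL with ⟨rfl, h⟩ | ⟨M', rfl, -⟩
  · exact ((cons_eq_cons.1 h).1).le
  · exact (pairwise_append.1 hsort).2.2 x mem_cons_self e mem_cons_self |>.le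

theorem mem_of_mem_append_cons_of_lt {M D : List α} {e s x : α}
    (hsort : (M ++ e :: D).Pairwise (· > ·)) (hse : s ≤ e) (hx : x ∈ M ++ e :: D)
    (hxs : x < s) : x ∈ D := by
  simp only [mem_append, mem_cons] at hx
  rcases hx with hx | rfl | hx
  · exact absurd ((pairwise_append.1 hsort).2.2 x hx e mem_cons_self) (by order)
  · exact absurd hxs (not_lt.2 hse)
  · exact hx

theorem le_of_mem_append_cons_of_le {M D : List α} {e s x : α}
    (hsort : (M ++ e :: D).Pairwise (· > ·)) (hD : ∀ x ∈ D, x < s) (hx : x ∈ M ++ e :: D)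
    (hsx : s ≤ x) : e ≤ x := by
  simp only [mem_append, mem_cons] at hx
  rcases hx with hx | rfl | hx
  · exact ((pairwise_append.1 hsort).2.2 x hx e mem_cons_self).le
  · exact le_rfl
  · exact absurd (hD x hx) (not_lt.2 hsx)

theorem pairwise_reverse_append_cons {M D : List α} {e p : α}
    (hsort : (M ++ e :: D).Pairwise (· > ·)) (hpe : p ≤ e) (hD : ∀ x ∈ D, x < p) :
    (D.reverse ++ p :: M.reverse).Pairwise (· < ·) := by
  simp only [pairwise_append, pairwise_cons, pairwise_reverse, mem_cons,
    mem_reverse] at hsort ⊢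
  obtain ⟨hM, ⟨-, hD'⟩, hMeD⟩ := hsort
  refine ⟨hD', ⟨fun m hm => hpe.trans_lt (hMeD m hm e (.inl rfl)), hM⟩, ?_⟩
  rintro x hx b (rfl | hb)
  · exact hD x hx
  · exact ((hD x hx).trans_le hpe).trans (hMeD b hb e (.inl rfl))

theorem exists_eq_cons_of_pairwise_lt {l : List α} {a : α} (hl : l.Pairwise (· < ·))
    (ha : a ∈ l) :
    ∃ c L, l = c :: L ∧ c ≤ a ∧ L.Pairwise (· < ·) ∧ ∀ b ∈ l, a < b → b ∈ L := by
  obtain ⟨c, L, rfl⟩ := exists_cons_of_ne_nil (ne_nil_of_mem ha)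
  have hc : c ≤ a := by
    rcases mem_cons.1 ha with rfl | ha
    · exact le_rfl
    · exact (rel_of_pairwise_cons hl ha).le
  refine ⟨c, L, rfl, hc, hl.of_cons, fun b hb hab => ?_⟩
  exact (mem_cons.1 hb).resolve_left (hc.trans_lt hab).ne'

end SortedLists

section Insertion

variable {α : Type*}

/-- The tableau with first column `c` whose `i`-th row continues with `R[i]` (or with nothing). -/
def consColumn : List α → List (List α) → List (List α)
  | [], _ => []
  | x :: c, R => (x :: R.headD []) :: consColumn c R.tail

theorem map_length_consColumn_nil (c : List α) :
    (consColumn c []).map length = replicate c.length 1 := by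
  induction c with
  | nil => rfl
  | cons x c ih => simp [consColumn, ih, replicate_succ]

variable [LinearOrder α]

theorem rowInsert_of_forall_le {r : List α} {x : α} (h : ∀ y ∈ r, y ≤ x) :
    rowInsert r x = (r ++ [x], none) := by
  induction r with
  | nil => rfl
  | cons y r ih =>
    simp only [mem_cons, forall_eq_or_imp] at h
    simp [rowInsert, not_lt.2 h.1, ih h.2]

theorem tableauInsert_cons_of_forall_le {r : List α} {T : List (List α)} {x : α}
    (h : ∀ y ∈ r, y ≤ x) : tableauInsert (r :: T) x = (r ++ [x]) :: T := by
  simp [tableauInsert, rowInsert_of_forall_le h]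

theorem tableauInsert_cons_of_lt {r : List α} {T : List (List α)} {d x : α} (h : x < d) :
    tableauInsert ((d :: r) :: T) x = (x :: r) :: tableauInsert T d := by
  simp [tableauInsert, rowInsert, h]

theorem tableauInsert_cons_cons_of_le_of_lt {r : List α} {T : List (List α)} {p d x : α}
    (hp : p ≤ x) (h : x < d) :
    tableauInsert ((p :: d :: r) :: T) x = (p :: x :: r) :: tableauInsert T d := by
  simp [tableauInsert, rowInsert, not_lt.2 hp, h]

theorem RS_append (w₁ w₂ : List α) : RS (w₁ ++ w₂) = w₂.foldl tableauInsert (RS w₁) :=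
  foldl_append

theorem length_rowInsert_add_length (r : List α) (x : α) :
    (rowInsert r x).1.length + (rowInsert r x).2.toList.length = r.length + 1 := by
  induction r with
  | nil => rfl
  | cons y r ih =>
    unfold rowInsert
    split_ifs
    · simp
    · simp only [length_cons]
      omega

theorem sum_map_length_tableauInsert (T : List (List α)) (x : α) :
    ((tableauInsert T x).map length).sum = (T.map length).sum + 1 := by
  induction T generalizing x with
  | nil => rfl
  | cons r T ih =>
    have := length_rowInsert_add_length r x
    rcases h : rowInsert r x with ⟨r', _ | y⟩ <;> simp_all [tableauInsert] <;> omega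

theorem sum_RSshape (w : List α) : (RSshape w).sum = w.length := by
  suffices ∀ T : List (List α),
      ((w.foldl tableauInsert T).map length).sum = (T.map length).sum + w.length by
    simpa [RSshape, RS] using this []
  induction w with
  | nil => simp
  | cons x w ih =>
    intro T
    rw [foldl_cons, ih, sum_map_length_tableauInsert, length_cons]
    omega

theorem RSshape_eq_of_exists {w : List α} {p : List ℕ}
    (h : ∃ k, RSshape w = p ++ replicate k 1) :
    RSshape w = p ++ replicate (w.length - p.sum) 1 := by
  obtain ⟨k, hk⟩ := h
  have hsum := sum_RSshape w
  rw [hk, sum_append, sum_replicate, smul_eq_mul, mul_one] at hsum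
  rw [hk, ← hsum, Nat.add_sub_cancel_left]

theorem tableauInsert_consColumn {c : List α} {R : List (List α)} {x : α}
    (hc : (x :: c).Pairwise (· < ·)) (hR : R.length ≤ c.length) :
    tableauInsert (consColumn c R) x = consColumn (x :: c) R := by
  induction c generalizing x R with
  | nil =>
    obtain rfl : R = [] := eq_nil_of_length_eq_zero (by simpa using hR)
    rfl
  | cons y c ih =>
    rw [consColumn, tableauInsert_cons_of_lt (rel_of_pairwise_cons hc mem_cons_self),
      ih hc.of_cons (by simp at hR ⊢; omega)]
    rfl

theorem foldl_tableauInsert_consColumn {c L : List α} {R : List (List α)}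
    (h : (L.reverse ++ c).Pairwise (· < ·)) (hR : R.length ≤ c.length) :
    L.foldl tableauInsert (consColumn c R) = consColumn (L.reverse ++ c) R := by
  induction L generalizing c with
  | nil => rfl
  | cons x L ih =>
    rw [reverse_cons, append_assoc, singleton_append] at h ⊢
    rw [foldl_cons, tableauInsert_consColumn (h.sublist (sublist_append_right _ _)) hR,
      ih h (by simp only [length_cons]; omega)]

/-- The entries `≥ p` of `d :: L` (those of `M ++ [e]`) take turns in the second box of the first
row, each pushing its predecessor into the first column; the remaining ones, `D`, push the first
column down. -/
theorem foldl_tableauInsert_arm {p d e : α} {rest c L M D : List α}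
    (hL : d :: L = M ++ e :: D) (hsort : (c.reverse ++ d :: L).Pairwise (· > ·))
    (hpe : p ≤ e) (hD : ∀ x ∈ D, x < p) :
    L.foldl tableauInsert ((p :: d :: rest) :: consColumn c []) =
      consColumn (D.reverse ++ p :: (M.reverse ++ c)) [e :: rest] := by
  induction M generalizing d L c with
  | nil =>
    obtain ⟨rfl, rfl⟩ := cons_eq_cons.1 hL
    have hcol := pairwise_reverse_append_cons hsort hpe hD
    rw [reverse_reverse] at hcol
    rw [show (p :: d :: rest) :: consColumn c [] = consColumn (p :: c) [d :: rest] from rfl]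
    simpa using foldl_tableauInsert_consColumn hcol (by simp)
  | cons m M ih =>
    obtain ⟨rfl, hx⟩ := cons_eq_cons.1 (hL.trans (cons_append ..))
    obtain ⟨x, L, rfl⟩ := exists_cons_of_ne_nil (show L ≠ [] by simp [hx])
    have hxd : x < d := rel_of_pairwise_cons (pairwise_append.1 hsort).2.1 mem_cons_self
    have hpx : p ≤ x :=
      hpe.trans (le_of_cons_eq_append_cons hx (hx ▸ (pairwise_append.1 hsort).2.1.of_cons))
    have hdc : (d :: c).Pairwise (· < ·) := by
      simpa using (pairwise_reverse (R := (· < ·))).2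
        (hsort.sublist (by simp : (c.reverse ++ [d]).Sublist (c.reverse ++ d :: x :: L)))
    rw [foldl_cons, tableauInsert_cons_cons_of_le_of_lt hpx hxd,
      tableauInsert_consColumn hdc (by simp), ih hx (by simpa using hsort)]
    simp

theorem RS_cons_eq_consColumn {s e : α} {M D : List α}
    (hsort : (M ++ e :: D).Pairwise (· > ·)) (hse : s ≤ e) (hD : ∀ x ∈ D, x < s) :
    RS (s :: (M ++ e :: D)) = consColumn (D.reverse ++ s :: M.reverse) [[e]] := by
  obtain ⟨d, L, hL⟩ := exists_cons_of_ne_nil (show M ++ e :: D ≠ [] by simp)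
  have hsd : s ≤ d := hse.trans (le_of_cons_eq_append_cons hL.symm hsort)
  have hstart : tableauInsert [[s]] d = (s :: d :: []) :: consColumn [] [] :=
    tableauInsert_cons_of_forall_le (by simpa using hsd)
  rw [hL, RS, foldl_cons, foldl_cons, show tableauInsert [] s = [[s]] from rfl, hstart,
    foldl_tableauInsert_arm hL.symm (by simpa [← hL] using hsort) hse hD]
  simp

theorem exists_RS_cons_eq_consColumn {D : List α} {s x : α} (hD : D.Pairwise (· > ·))
    (hx : x ∈ D) (hsx : s ≤ x) :
    ∃ e c, RS (s :: D) = consColumn c [[e]] ∧ c.Pairwise (· < ·) ∧ s ∈ c ∧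
      (∀ z ∈ c, z = s ∨ z ∈ D) ∧ (∀ z ∈ D, z < s → z ∈ c) ∧
      e ∈ D ∧ s ≤ e ∧ ∀ z ∈ D, s ≤ z → e ≤ z := by
  obtain ⟨M, e, D', rfl, hse, hD'⟩ := exists_eq_append_cons_of_le hx hsx
  refine ⟨e, D'.reverse ++ s :: M.reverse, RS_cons_eq_consColumn hD hse hD',
    pairwise_reverse_append_cons hD hse hD', by simp, fun z hz => ?_,
    fun z hz hzs => ?_, by simp, hse, fun z hz hsz => le_of_mem_append_cons_of_le hD hD' hz hsz⟩
  · simp only [mem_append, mem_reverse, mem_cons] at hz ⊢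
    tauto
  · simp [mem_of_mem_append_cons_of_lt hD hse hz hzs]

end Insertion

section MinusSeq

variable {u : List ℝ} {a s : ℝ}

theorem RS_minusSeq_cons_append :
    RS (minusSeq (s :: u ++ [a])) =
      tableauInsert (RS (s :: (u ++ a :: -a :: u.reverse.map (-·)))) (-s) := by
  simp [minusSeq, RS, foldl_append]

theorem pairwise_map_neg_reverse (hu : u.Pairwise (· > ·)) :
    (u.reverse.map (-·)).Pairwise (· > ·) := by
  simpa [pairwise_map, pairwise_reverse] using hu

theorem lt_neg_abs_of_mem_map_neg_reverse (hua : ∀ x ∈ u, |a| < x) :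
    ∀ y ∈ u.reverse.map (-·), y < -|a| := by
  simp only [mem_map, mem_reverse]
  rintro _ ⟨x, hx, rfl⟩
  linarith [hua x hx]

theorem pairwise_append_cons_map_neg (hu : u.Pairwise (· > ·)) (hua : ∀ x ∈ u, |a| < x) :
    (u ++ a :: u.reverse.map (-·)).Pairwise (· > ·) := by
  have hv := lt_neg_abs_of_mem_map_neg_reverse hua
  refine pairwise_append.2 ⟨hu, pairwise_cons.2 ⟨fun y hy => ?_, pairwise_map_neg_reverse hu⟩,
    fun x hx y hy => ?_⟩
  · linarith [hv y hy, neg_abs_le a]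
  · rcases mem_cons.1 hy with hya | hy
    · linarith [hua x hx, le_abs_self a]
    · linarith [hua x hx, hv y hy, abs_nonneg a]

theorem pairwise_append_cons_cons_map_neg (hu : u.Pairwise (· > ·)) (hua : ∀ x ∈ u, |a| < x)
    (ha : 0 < a) : (u ++ a :: -a :: u.reverse.map (-·)).Pairwise (· > ·) := by
  have hv := lt_neg_abs_of_mem_map_neg_reverse hua
  have hav : (-a :: u.reverse.map (-·)).Pairwise (· > ·) :=
    pairwise_cons.2
      ⟨fun y hy => by linarith [hv y hy, le_abs_self a], pairwise_map_neg_reverse hu⟩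
  refine pairwise_append.2 ⟨hu, pairwise_cons.2 ⟨fun y hy => ?_, hav⟩, fun x hx y hy => ?_⟩
  · rcases mem_cons.1 hy with hya | hy
    · linarith
    · linarith [hv y hy, neg_abs_le a]
  · simp only [mem_cons] at hy
    rcases hy with hya | hya | hy
    · linarith [hua x hx, le_abs_self a]
    · linarith [hua x hx, neg_abs_le a]
    · linarith [hua x hx, hv y hy, abs_nonneg a]

theorem RSshape_minusSeq_of_pos_of_le (hu : u.Pairwise (· > ·)) (hua : ∀ x ∈ u, |a| < x)
    (ha : 0 < a) (hs : s ≤ -a) :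
    ∃ k, RSshape (minusSeq (s :: u ++ [a])) = [3] ++ replicate k 1 := by
  have hmem : -a ∈ u ++ a :: -a :: u.reverse.map (-·) := by simp
  obtain ⟨e, c, hRS, hc, hsc, -, -, -, -, hemin⟩ :=
    exists_RS_cons_eq_consColumn (pairwise_append_cons_cons_map_neg hu hua ha) hmem hs
  have hea : e ≤ -a := hemin (-a) hmem hs
  obtain ⟨h, H, rfl, hhs, -, -⟩ := exists_eq_cons_of_pairwise_lt hc hsc
  refine ⟨H.length, ?_⟩
  rw [RSshape, RS_minusSeq_cons_append, hRS, consColumn, headD_cons, tail_cons,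
    tableauInsert_cons_of_forall_le]
  · simp [map_length_consColumn_nil]
  · simp only [mem_cons, not_mem_nil, or_false, forall_eq_or_imp, forall_eq]
    constructor <;> linarith

theorem RSshape_minusSeq_of_pos_of_lt (hu : u.Pairwise (· > ·)) (hua : ∀ x ∈ u, |a| < x)
    (ha : 0 < a) (hs : -a < s) (hsu : ∃ x ∈ u, s ≤ x) :
    ∃ k, RSshape (minusSeq (s :: u ++ [a])) = [2, 2] ++ replicate k 1 := by
  obtain ⟨x, hxu, hsx⟩ := hsu
  obtain ⟨e, c, hRS, hc, hsc, -, hDc, heD, hse, -⟩ :=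
    exists_RS_cons_eq_consColumn (pairwise_append_cons_cons_map_neg hu hua ha)
      (by simp [hxu] : x ∈ u ++ a :: -a :: u.reverse.map (-·)) hsx
  have hae : a ≤ e := by
    simp only [mem_append, mem_cons, mem_map, mem_reverse] at heD
    rcases heD with he | rfl | rfl | ⟨z, hz, rfl⟩
    · linarith [hua e he, le_abs_self a]
    · exact le_rfl
    · linarith
    · linarith [hua z hz, le_abs_self a]
  have hxs : -x < s := by linarith [hua x hxu, le_abs_self a]
  obtain ⟨y, L, rfl, hyx, hL, hLmem⟩ :=
    exists_eq_cons_of_pairwise_lt hc (hDc (-x) (by simp [hxu]) hxs)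
  obtain ⟨k, K, rfl, hks, -, -⟩ := exists_eq_cons_of_pairwise_lt hL (hLmem s hsc hxs)
  refine ⟨K.length, ?_⟩
  rw [RSshape, RS_minusSeq_cons_append, hRS]
  simp only [consColumn, headD_cons, tail_cons, headD_nil, tail_nil]
  rw [tableauInsert_cons_cons_of_le_of_lt (by linarith) (by linarith),
    tableauInsert_cons_of_forall_le (by simpa using hks.trans hse)]
  simp [map_length_consColumn_nil]

theorem RSshape_minusSeq_of_nonpos_of_le (hu : u.Pairwise (· > ·)) (hua : ∀ x ∈ u, |a| < x)
    (ha : a ≤ 0) (hs : s ≤ a) :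
    ∃ k, RSshape (minusSeq (s :: u ++ [a])) = [4] ++ replicate k 1 := by
  have hUv := pairwise_append_cons_map_neg hu hua
  have hU : (u ++ [a]).Pairwise (· > ·) := hUv.sublist (by simp)
  obtain ⟨M, g, V, hsplit, hsg, hV⟩ :=
    exists_eq_append_cons_of_le (mem_cons_self (a := a) (l := u.reverse.map (-·))) hs
  have hga : g ≤ a := by
    have hgmem : g ∈ a :: u.reverse.map (-·) := by rw [hsplit]; simp
    simp only [mem_cons, mem_map, mem_reverse] at hgmem
    rcases hgmem with rfl | ⟨z, hz, rfl⟩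
    · exact le_rfl
    · linarith [hua z hz, neg_abs_le a]
  have hcol := pairwise_reverse_append_cons (by rwa [hsplit, ← append_assoc] at hUv) hsg hV
  rw [reverse_append] at hcol
  obtain ⟨h, H, hcolEq, hhs, -, -⟩ := exists_eq_cons_of_pairwise_lt hcol (a := s) (by simp)
  refine ⟨H.length, ?_⟩
  rw [RSshape, RS_minusSeq_cons_append,
    show s :: (u ++ a :: -a :: u.reverse.map (-·)) = s :: (u ++ [a]) ++ -a :: u.reverse.map (-·)
      by simp,
    RS_append, RS_cons_eq_consColumn (by simpa using hU) hs (by simp), foldl_cons]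
  have hrow₁ : ∀ z ∈ [s, a], z ≤ -a := by
    simp only [mem_cons, not_mem_nil, or_false, forall_eq_or_imp, forall_eq]
    constructor <;> linarith
  have hrow₂ : ∀ z ∈ [h, g, -a], z ≤ -s := by
    simp only [mem_cons, not_mem_nil, or_false, forall_eq_or_imp, forall_eq]
    refine ⟨?_, ?_, ?_⟩ <;> linarith
  simp only [reverse_nil, nil_append, consColumn, headD_cons, tail_cons]
  rw [tableauInsert_cons_of_forall_le hrow₁, cons_append, cons_append, nil_append,
    foldl_tableauInsert_arm hsplit (by simpa using hUv) hsg hV, hcolEq]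
  simp only [consColumn, headD_cons, tail_cons]
  rw [tableauInsert_cons_of_forall_le hrow₂]
  simp [map_length_consColumn_nil]

theorem exists_RS_eq_consColumn_of_nonpos_of_lt (hu : u.Pairwise (· > ·))
    (hua : ∀ x ∈ u, |a| < x) (ha : a ≤ 0) (hs : a < s) (hsu : ∃ x ∈ u, s ≤ x) :
    ∃ c e, RS (s :: (u ++ [a, -a])) = consColumn c [[-a], [e]] ∧ c.Pairwise (· < ·) ∧
      a ∈ c ∧ s ∈ c ∧ (∀ z ∈ c, a ≤ z) ∧ s ≤ e ∧ -a < e := by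
  obtain ⟨x, hxu, hsx⟩ := hsu
  have hU : (u ++ [a]).Pairwise (· > ·) := (pairwise_append_cons_map_neg hu hua).sublist (by simp)
  obtain ⟨e, c, hRS, hc, hsc, hcU, hUc, heU, hse, -⟩ :=
    exists_RS_cons_eq_consColumn hU (by simp [hxu] : x ∈ u ++ [a]) hsx
  have hca : ∀ z ∈ c, a ≤ z := by
    intro z hz
    simp only [mem_append, mem_singleton] at hcU
    rcases hcU z hz with rfl | hz | rfl
    · exact hs.le
    · linarith [hua z hz, le_abs_self a]
    · exact le_rfl
  have hae : -a < e := by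
    simp only [mem_append, mem_singleton] at heU
    rcases heU with he | rfl
    · linarith [hua e he, neg_le_abs a]
    · linarith
  have hac := hUc a (by simp) hs
  obtain ⟨y, L, rfl, hya, hL, hLmem⟩ := exists_eq_cons_of_pairwise_lt hc hac
  obtain ⟨h, H, rfl, hhs, -, -⟩ := exists_eq_cons_of_pairwise_lt hL (hLmem s hsc hs)
  refine ⟨y :: h :: H, e, ?_, hc, hac, hsc, hca, hse, hae⟩
  rw [show s :: (u ++ [a, -a]) = s :: (u ++ [a]) ++ [-a] by simp, RS_append, hRS, foldl_cons]
  simp only [consColumn, headD_cons, tail_cons, headD_nil, tail_nil]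
  rw [tableauInsert_cons_cons_of_le_of_lt (by linarith) hae,
    tableauInsert_cons_of_forall_le (by simpa using hhs.trans hse)]
  rfl

theorem RSshape_minusSeq_of_nonpos_of_lt (hu : u.Pairwise (· > ·)) (hua : ∀ x ∈ u, |a| < x)
    (ha : a ≤ 0) (hs : a < s) (hsu : ∃ x ∈ u, s ≤ x) :
    ∃ k, RSshape (minusSeq (s :: u ++ [a])) = [2, 2, 2] ++ replicate k 1 := by
  obtain ⟨c, e, hRS, hc, hac, hsc, hca, hse, hae⟩ :=
    exists_RS_eq_consColumn_of_nonpos_of_lt hu hua ha hs hsu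
  have hlen : [[-a], [e]].length ≤ c.length := by
    obtain ⟨y, L, rfl, -, -, hLmem⟩ := exists_eq_cons_of_pairwise_lt hc hac
    simpa using (length_pos_of_mem (hLmem s hsc hs)).nat_succ_le
  obtain ⟨x, hxu, hsx⟩ := hsu
  have hxa : -x < a := by linarith [hua x hxu, neg_abs_le a]
  have hcol : (u.map (-·) ++ c).Pairwise (· < ·) := by
    refine pairwise_append.2 ⟨by simpa [pairwise_map] using hu, hc, fun z hz w hw => ?_⟩
    obtain ⟨z, hz', rfl⟩ := mem_map.1 hz
    linarith [hua z hz', neg_abs_le a, hca w hw]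
  obtain ⟨c₁, L₁, hcolEq, hc₁, hL₁, hL₁mem⟩ :=
    exists_eq_cons_of_pairwise_lt hcol (a := -x) (by simp [hxu])
  obtain ⟨c₂, L₂, rfl, hc₂, hL₂, hL₂mem⟩ :=
    exists_eq_cons_of_pairwise_lt hL₁ (hL₁mem a (by simp [hac]) hxa)
  obtain ⟨c₃, K, rfl, hc₃, -, -⟩ :=
    exists_eq_cons_of_pairwise_lt hL₂ (hL₂mem s (hL₁mem s (by simp [hsc]) (hxa.trans hs)) hs)
  refine ⟨K.length, ?_⟩
  rw [RSshape, RS_minusSeq_cons_append,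
    show s :: (u ++ a :: -a :: u.reverse.map (-·)) = s :: (u ++ [a, -a]) ++ u.reverse.map (-·)
      by simp,
    RS_append, hRS, foldl_tableauInsert_consColumn (by simpa using hcol) hlen,
    show (u.reverse.map (-·)).reverse ++ c = c₁ :: c₂ :: c₃ :: K by simpa using hcolEq]
  simp only [consColumn, headD_cons, tail_cons, headD_nil, tail_nil]
  rw [tableauInsert_cons_cons_of_le_of_lt (by linarith) (by linarith),
    tableauInsert_cons_cons_of_le_of_lt (by linarith) hae,
    tableauInsert_cons_of_forall_le (by simpa using hc₃.trans hse)]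
  simp [map_length_consColumn_nil]

theorem RSshape_minusSeq_cons_append (hu : u.Pairwise (· > ·)) (hua : ∀ x ∈ u, |a| < x) :
    ((-|a| < s ∧ ∃ x ∈ u, s ≤ x) →
      (RSshape (minusSeq (s :: u ++ [a])) =
          2 :: 2 :: replicate ((minusSeq (s :: u ++ [a])).length - 4) 1 ∨
        RSshape (minusSeq (s :: u ++ [a])) =
          2 :: 2 :: 2 :: replicate ((minusSeq (s :: u ++ [a])).length - 6) 1)) ∧
    (s ≤ -|a| →
      (RSshape (minusSeq (s :: u ++ [a])) =
          3 :: replicate ((minusSeq (s :: u ++ [a])).length - 3) 1 ∨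
        RSshape (minusSeq (s :: u ++ [a])) =
          4 :: replicate ((minusSeq (s :: u ++ [a])).length - 4) 1)) := by
  refine ⟨fun ⟨hs, hsu⟩ => ?_, fun hs => ?_⟩ <;> rcases lt_or_ge 0 a with ha | ha
  · rw [abs_of_pos ha] at hs
    exact .inl (RSshape_eq_of_exists (RSshape_minusSeq_of_pos_of_lt hu hua ha hs hsu))
  · rw [abs_of_nonpos ha, neg_neg] at hs
    exact .inr (RSshape_eq_of_exists (RSshape_minusSeq_of_nonpos_of_lt hu hua ha hs hsu))
  · rw [abs_of_pos ha] at hs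
    exact .inl (RSshape_eq_of_exists (RSshape_minusSeq_of_pos_of_le hu hua ha hs))
  · rw [abs_of_nonpos ha, neg_neg] at hs
    exact .inr (RSshape_eq_of_exists (RSshape_minusSeq_of_nonpos_of_le hu hua ha hs))

end MinusSeq

theorem ofFn_eq_cons_append {α : Type*} {n : ℕ} (hn : 2 ≤ n) (t : Fin n → α) :
    List.ofFn t = t ⟨0, Nat.zero_lt_of_lt hn⟩ ::
      List.ofFn (fun i : Fin (n - 2) => t ⟨i + 1, by omega⟩) ++
        [t ⟨n - 1, Nat.sub_lt (Nat.zero_lt_of_lt hn) Nat.one_pos⟩] := by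
  obtain ⟨m, rfl⟩ : ∃ m, n = m + 2 := ⟨n - 2, by omega⟩
  rw [List.ofFn_succ, List.ofFn_succ', concat_eq_append]
  rfl

/-- Let `t₁, …, tₙ` be real numbers, congruent to one another modulo `ℤ`, with
`t₂ > t₃ > ⋯ > t_{n−1} > |tₙ|`, and let `t⁻ = (t₁, …, tₙ, −tₙ, …, −t₁)`.  If
`−|tₙ| < t₁ ≤ t₂` then the Robinson–Schensted insertion tableau `P(t⁻)` has shape
`[2², 1^{2n−4}]` or `[2³, 1^{2n−6}]`; if `t₁ ≤ −|tₙ|` then `P(t⁻)` has shape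
`[3, 1^{2n−3}]` or `[4, 1^{2n−4}]`. -/
theorem rs_shape_type_D
    (n : ℕ) (hn : 2 ≤ n) (t : Fin n → ℝ)
    (hdec : ∀ i j : Fin n, 1 ≤ (i : ℕ) → i < j → (j : ℕ) < n - 1 → t j < t i)
    (hlast : |t ⟨n - 1, by omega⟩| < t ⟨n - 2, by omega⟩) :
    ((-|t ⟨n - 1, by omega⟩| < t ⟨0, by omega⟩ ∧ t ⟨0, by omega⟩ ≤ t ⟨1, by omega⟩) →
      (RSshape (minusSeq (List.ofFn t)) = 2 :: 2 :: List.replicate (2 * n - 4) 1 ∨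
        RSshape (minusSeq (List.ofFn t)) = 2 :: 2 :: 2 :: List.replicate (2 * n - 6) 1)) ∧
    (t ⟨0, by omega⟩ ≤ -|t ⟨n - 1, by omega⟩| →
      (RSshape (minusSeq (List.ofFn t)) = 3 :: List.replicate (2 * n - 3) 1 ∨
        RSshape (minusSeq (List.ofFn t)) = 4 :: List.replicate (2 * n - 4) 1)) := by
  have hu : (List.ofFn fun i : Fin (n - 2) => t ⟨i + 1, by omega⟩).Pairwise (· > ·) :=
    List.pairwise_ofFn.2 fun i j hij => hdec ⟨i + 1, by omega⟩ ⟨j + 1, by omega⟩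
      (Nat.le_add_left 1 i) (Fin.mk_lt_mk.2 (Nat.succ_lt_succ hij)) (by simp only; omega)
  have hua : ∀ x ∈ List.ofFn (fun i : Fin (n - 2) => t ⟨i + 1, by omega⟩),
      |t ⟨n - 1, by omega⟩| < x := by
    simp only [List.mem_ofFn]
    rintro _ ⟨i, rfl⟩
    rcases (show (i : ℕ) + 1 = n - 2 ∨ (i : ℕ) + 1 < n - 2 by omega) with h | h
    · rwa [show (⟨i + 1, by omega⟩ : Fin n) = ⟨n - 2, by omega⟩ from Fin.ext h]
    · exact hlast.trans (hdec ⟨i + 1, by omega⟩ ⟨n - 2, by omega⟩ (Nat.le_add_left 1 i)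
        (Fin.mk_lt_mk.2 h) (by simp only; omega))
  have hsu : t ⟨0, by omega⟩ ≤ t ⟨1, by omega⟩ →
      ∃ x ∈ List.ofFn (fun i : Fin (n - 2) => t ⟨i + 1, by omega⟩),
        t ⟨0, by omega⟩ ≤ x := by
    intro hs₁
    rcases (show n = 2 ∨ 3 ≤ n by omega) with rfl | h3
    · have : |t ⟨1, by omega⟩| < t ⟨0, by omega⟩ := hlast
      linarith [le_abs_self (t ⟨1, by omega⟩)]
    · exact ⟨t ⟨1, by omega⟩, List.mem_ofFn.2 ⟨⟨0, by omega⟩, rfl⟩, hs₁⟩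
  have hlen : (minusSeq (List.ofFn t)).length = 2 * n := by
    simp only [minusSeq, length_append, length_map, length_reverse, length_ofFn]
    ring
  rw [ofFn_eq_cons_append hn] at hlen ⊢
  generalize List.ofFn (fun i : Fin (n - 2) => t ⟨i + 1, by omega⟩) = u at hu hua hsu hlen ⊢
  obtain ⟨hgt, hle⟩ := RSshape_minusSeq_cons_append hu hua
  rw [hlen] at hgt hle
  exact ⟨fun ⟨hs, hs₁⟩ => hgt ⟨hs, hsu hs₁⟩, hle⟩
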